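/- arXiv:2502.07976 — 5 statements merged into one kernel-verified Lean document; each statement's English description precedes it below -/
import Mathlib

section
/- On an interval E = (a,b) with constant κ > 0 and τ > 0, let φ_a, φ_b be the linear hat functions with φ_a(a)=1, φ_a(b)=0, φ_b(a)=0, φ_b(b)=1, and r = φ_b − φ_a. If q = α + βr ∈ P₁(E) satisfies ∫_E κ⁻¹ q p dx + (|E|/(2τ)) ∫_E p' q' dx = (|E|/(2τ))[τ(λ_a + λ_b) p'|_E + ∫_E f p' dx] + λ_a p(a) − λ_b p(b) for all p ∈ P₁(E), then α = (κ/|E|)(λ_a − λ_b) and β = 3κ/(6κ + τ|E|) ∫_E f dx. -/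
/-!
Testing the variational identity with p = 1 and with p = r decouples the two coefficients,
because r has mean zero on E: p = 1 only sees α, through κ⁻¹ α |E| = λ_a − λ_b, while
p = r only sees β, through κ⁻¹ β |E|/3 + 2β/τ = τ⁻¹ ∫_E f. The moments of r follow from
r' = 2/|E| and r(a) = −1, r(b) = 1, since (|E|/(2(n+1))) r^(n+1) is a primitive of rⁿ.
-/

open MeasureTheory intervalIntegral

/-- The paper's `r = φ_b − φ_a`. -/
noncomputable def hatDiff (a b x : ℝ) : ℝ := (2 * x - (a + b)) / (b - a)

section
variable {a b : ℝ}

theorem hasDerivAt_hatDiff (x : ℝ) : HasDerivAt (hatDiff a b) (2 / (b - a)) x := by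
  have h := (((hasDerivAt_id x).const_mul 2).sub_const (a + b)).div_const (b - a)
  rw [mul_one] at h
  exact h

@[fun_prop]
theorem continuous_hatDiff : Continuous (hatDiff a b) := by
  unfold hatDiff; fun_prop

theorem hatDiff_apply_left (hab : a ≠ b) : hatDiff a b a = -1 := by
  rw [hatDiff, div_eq_iff (sub_ne_zero.mpr hab.symm)]; ring

theorem hatDiff_apply_right (hab : a ≠ b) : hatDiff a b b = 1 := by
  rw [hatDiff, div_eq_iff (sub_ne_zero.mpr hab.symm)]; ring

theorem integral_hatDiff_pow (hab : a ≠ b) (n : ℕ) :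
    ∫ x in a..b, hatDiff a b x ^ n = (b - a) / (2 * (n + 1)) * (1 - (-1) ^ (n + 1)) := by
  have hba : b - a ≠ 0 := sub_ne_zero.mpr hab.symm
  have hderiv : ∀ x, HasDerivAt (fun x => (b - a) / (2 * (n + 1)) * hatDiff a b x ^ (n + 1))
      (hatDiff a b x ^ n) x := by
    intro x
    refine (((hasDerivAt_hatDiff x).fun_pow (n + 1)).const_mul _).congr_deriv ?_
    push_cast
    field_simp
  rw [integral_eq_sub_of_hasDerivAt (fun x _ => hderiv x)
    ((continuous_hatDiff.pow n).intervalIntegrable a b), hatDiff_apply_left hab,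
    hatDiff_apply_right hab]
  ring

theorem integral_const_add_mul_hatDiff (hab : a ≠ b) (α β : ℝ) :
    ∫ x in a..b, (α + β * hatDiff a b x) = α * (b - a) := by
  have h := integral_hatDiff_pow hab 1
  rw [intervalIntegral.integral_add, intervalIntegral.integral_const_mul]
  · simp only [pow_one] at h
    rw [h]; norm_num; ring
  all_goals apply Continuous.intervalIntegrable; fun_prop

theorem integral_const_add_mul_hatDiff_mul_hatDiff (hab : a ≠ b) (α β : ℝ) :
    ∫ x in a..b, (α + β * hatDiff a b x) * hatDiff a b x = β * (b - a) / 3 := by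
  have h1 := integral_hatDiff_pow hab 1
  have h2 := integral_hatDiff_pow hab 2
  simp only [add_mul, mul_assoc, ← sq]
  rw [intervalIntegral.integral_add, intervalIntegral.integral_const_mul,
    intervalIntegral.integral_const_mul]
  · simp only [pow_one] at h1
    rw [h1, h2]; norm_num; ring
  all_goals apply Continuous.intervalIntegrable; fun_prop
end

theorem stmt_4_general (a b κ τ lama lamb α β : ℝ) (hab : a < b) (hκ : 0 < κ) (hτ : 0 < τ)
    (f : ℝ → ℝ)
    (φa φb r q : ℝ → ℝ)
    (hφa : ∀ x, φa x = (b - x) / (b - a))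
    (hφb : ∀ x, φb x = (x - a) / (b - a))
    (hr : ∀ x, r x = φb x - φa x)
    (hq : ∀ x, q x = α + β * r x)
    -- the variational identity, tested with all affine p(x) = c₀ + c₁ x (p' = c₁,
    -- q' = β r' = 2β/(b−a))
    (heq : ∀ c₀ c₁ : ℝ,
      (∫ x in a..b, κ⁻¹ * q x * (c₀ + c₁ * x)) +
          (b - a) / (2 * τ) * (∫ _x in a..b, c₁ * (β * (2 / (b - a)))) =
        (b - a) / (2 * τ) *
            (τ * (lama + lamb) * c₁ + ∫ x in a..b, f x * c₁) +
          lama * (c₀ + c₁ * a) - lamb * (c₀ + c₁ * b)) :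
    α = κ / (b - a) * (lama - lamb) ∧
      β = 3 * κ / (6 * κ + τ * (b - a)) * ∫ x in a..b, f x := by
  have hba : b - a ≠ 0 := (sub_pos.mpr hab).ne'
  have hr' : ∀ x, r x = hatDiff a b x := fun x => by
    rw [hr, hφa, hφb, hatDiff]; field_simp; ring
  have hr_affine : ∀ x, -(a + b) / (b - a) + 2 / (b - a) * x = hatDiff a b x := fun x => by
    rw [hatDiff]; field_simp; ring
  have htest_one : κ⁻¹ * (α * (b - a)) = lama - lamb := by
    simpa only [hq, hr', zero_mul, add_zero, mul_one, mul_zero, zero_add,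
      intervalIntegral.integral_const_mul, integral_const_add_mul_hatDiff hab.ne,
      intervalIntegral.integral_const, smul_eq_mul] using heq 1 0
  have htest_r : κ⁻¹ * (β * (b - a) / 3) + 2 * β / τ = (∫ x in a..b, f x) / τ := by
    have h := heq (-(a + b) / (b - a)) (2 / (b - a))
    simp only [hq, hr', hr_affine, hatDiff_apply_left hab.ne, hatDiff_apply_right hab.ne, mul_assoc,
      intervalIntegral.integral_const_mul, intervalIntegral.integral_mul_const,
      intervalIntegral.integral_const, smul_eq_mul,
      integral_const_add_mul_hatDiff_mul_hatDiff hab.ne] at h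
    field_simp at h ⊢
    linear_combination h
  have hden : 0 < 6 * κ + τ * (b - a) := by have := sub_pos.mpr hab; positivity
  constructor
  · field_simp at htest_one ⊢
    linarith
  · rw [div_mul_eq_mul_div, eq_div_iff hden.ne']
    field_simp at htest_r
    linear_combination htest_r

/-- coefficients of the local HDG flux solve on an interval. -/
theorem stmt_4 (a b κ τ lama lamb α β : ℝ) (hab : a < b) (hκ : 0 < κ) (hτ : 0 < τ)
    (f : ℝ → ℝ) (hf : IntervalIntegrable f volume a b)
    (φa φb r q : ℝ → ℝ)
    (hφa : ∀ x, φa x = (b - x) / (b - a))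
    (hφb : ∀ x, φb x = (x - a) / (b - a))
    (hr : ∀ x, r x = φb x - φa x)
    (hq : ∀ x, q x = α + β * r x)
    -- the variational identity, tested with all affine p(x) = c₀ + c₁ x (p' = c₁,
    -- q' = β r' = 2β/(b−a))
    (heq : ∀ c₀ c₁ : ℝ,
      (∫ x in a..b, κ⁻¹ * q x * (c₀ + c₁ * x)) +
          (b - a) / (2 * τ) * (∫ _x in a..b, c₁ * (β * (2 / (b - a)))) =
        (b - a) / (2 * τ) *
            (τ * (lama + lamb) * c₁ + ∫ x in a..b, f x * c₁) +
          lama * (c₀ + c₁ * a) - lamb * (c₀ + c₁ * b)) :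
    α = κ / (b - a) * (lama - lamb) ∧
      β = 3 * κ / (6 * κ + τ * (b - a)) * ∫ x in a..b, f x :=
  stmt_4_general a b κ τ lama lamb α β hab hκ hτ f φa φb r q hφa hφb hr hq heq
end

section
/- (Counterexample, one rectangle, P₁×P₁²×P₁.) Let E = (−h_x/2,h_x/2)×(−h_y/2,h_y/2), κ = 1, f = 0, and g(x,y) = (a x + b)(c y + d) with a = c = 2, b = h_x, d = h_y, so g ≥ 0 on the closure of E. Then u_h(x,y) = a d x + b c y + b d and q_h = −∇g satisfy: (i) ∫_E q_h·p − ∫_E u_h div p = −∫_{∂E} g (p·n) dσ for all p ∈ P₁(E)², and (ii) ∫_E v div q_h + τ∫_{∂E} u_h v dσ = τ∫_{∂E} g v dσ for all v ∈ P₁(E) and any τ > 0; moreover u_h(−h_x/2, −h_y/2) = −h_x h_y < 0. -/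
open MeasureTheory

/-- Integral over an open rectangle (x0,x1) × (y0,y1). -/
noncomputable def rInt (x0 x1 y0 y1 : ℝ) (F : ℝ × ℝ → ℝ) : ℝ :=
  ∫ p in Set.Ioo x0 x1 ×ˢ Set.Ioo y0 y1, F p

/-- Boundary integral ∫_{∂E} F dσ over the rectangle boundary. -/
noncomputable def rBd (x0 x1 y0 y1 : ℝ) (F : ℝ × ℝ → ℝ) : ℝ :=
  (∫ t in x0..x1, F (t, y0)) + (∫ t in x0..x1, F (t, y1)) +
  (∫ t in y0..y1, F (x0, t)) + (∫ t in y0..y1, F (x1, t))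

/-- Boundary integral ∫_{∂E} F · n dσ over the rectangle boundary (outward normal). -/
noncomputable def rBdN (x0 x1 y0 y1 : ℝ) (F : ℝ × ℝ → ℝ × ℝ) : ℝ :=
  (∫ t in x0..x1, -(F (t, y0)).2) + (∫ t in x0..x1, (F (t, y1)).2) +
  (∫ t in y0..y1, -(F (x0, t)).1) + (∫ t in y0..y1, (F (x1, t)).1)

/-- Divergence of a planar vector field. -/
noncomputable def div2 (F : ℝ × ℝ → ℝ × ℝ) (z : ℝ × ℝ) : ℝ :=
  fderiv ℝ (fun w => (F w).1) z (1, 0) + fderiv ℝ (fun w => (F w).2) z (0, 1)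

/-! The datum `g = (a x + b)(c y + d)` is harmonic and differs from its affine part
`u = a d x + b c y + b d` by `a c x y`. By Green's formula on the rectangle the flux equation
reduces to `∫_E (g - u) div p = 0`, which holds because `div p` is constant and `x y` is odd.
The conservation equation holds because `div q = -Δg = 0` and, again by odd symmetry,
`∫_{∂E} x y v dσ = 0` for affine `v`. -/

theorem continuous_div2 {F : ℝ × ℝ → ℝ × ℝ} (hF : ContDiff ℝ 1 F) :
    Continuous (div2 F) := by
  have h1 := (contDiff_fst.comp hF).continuous_fderiv one_ne_zero
  have h2 := (contDiff_snd.comp hF).continuous_fderiv one_ne_zero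
  unfold div2
  fun_prop

theorem div2_mul {φ P Q : ℝ × ℝ → ℝ} {z : ℝ × ℝ} (hφ : DifferentiableAt ℝ φ z)
    (hP : DifferentiableAt ℝ P z) (hQ : DifferentiableAt ℝ Q z) :
    div2 (fun w => (φ w * P w, φ w * Q w)) z =
      fderiv ℝ φ z (1, 0) * P z + fderiv ℝ φ z (0, 1) * Q z +
        φ z * div2 (fun w => (P w, Q w)) z := by
  simp only [div2, fderiv_fun_mul hφ hP, fderiv_fun_mul hφ hQ, add_apply,
    smul_apply, smul_eq_mul]
  ring

theorem hasFDerivAt_affine (c0 c1 c2 : ℝ) (z : ℝ × ℝ) :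
    HasFDerivAt (fun w : ℝ × ℝ => c0 + c1 * w.1 + c2 * w.2)
      (c1 • ContinuousLinearMap.fst ℝ ℝ ℝ + c2 • ContinuousLinearMap.snd ℝ ℝ ℝ) z :=
  ((hasFDerivAt_fst.const_mul c1).const_add c0).add (hasFDerivAt_snd.const_mul c2)

theorem div2_affine (p0 p1 p2 p3 p4 p5 : ℝ) (z : ℝ × ℝ) :
    div2 (fun w => (p0 + p1 * w.1 + p2 * w.2, p3 + p4 * w.1 + p5 * w.2)) z = p1 + p5 := by
  simp [div2, (hasFDerivAt_affine p0 p1 p2 z).fderiv, (hasFDerivAt_affine p3 p4 p5 z).fderiv]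

theorem hasFDerivAt_affine_mul_affine (a b c d : ℝ) (z : ℝ × ℝ) :
    HasFDerivAt (fun w : ℝ × ℝ => (a * w.1 + b) * (c * w.2 + d))
      ((a * z.1 + b) • c • ContinuousLinearMap.snd ℝ ℝ ℝ +
        (c * z.2 + d) • a • ContinuousLinearMap.fst ℝ ℝ ℝ) z :=
  ((hasFDerivAt_fst.const_mul a).add_const b).mul ((hasFDerivAt_snd.const_mul c).add_const d)

section Rectangle

variable {x0 x1 y0 y1 : ℝ}

theorem integrableOn_rect_of_continuous {F : ℝ × ℝ → ℝ} (hF : Continuous F) :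
    IntegrableOn F (Set.Ioo x0 x1 ×ˢ Set.Ioo y0 y1) :=
  (hF.continuousOn.integrableOn_compact (isCompact_Icc.prod isCompact_Icc)).mono_set
    (Set.prod_mono Set.Ioo_subset_Icc_self Set.Ioo_subset_Icc_self)

theorem rInt_sub {F G : ℝ × ℝ → ℝ} (hF : Continuous F) (hG : Continuous G) :
    rInt x0 x1 y0 y1 (fun z => F z - G z) = rInt x0 x1 y0 y1 F - rInt x0 x1 y0 y1 G :=
  integral_sub (integrableOn_rect_of_continuous hF) (integrableOn_rect_of_continuous hG)

theorem rInt_const_mul (c : ℝ) (F : ℝ × ℝ → ℝ) :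
    rInt x0 x1 y0 y1 (fun z => c * F z) = c * rInt x0 x1 y0 y1 F :=
  integral_const_mul c F

theorem rInt_eq_intervalIntegral (hx : x0 ≤ x1) (hy : y0 ≤ y1) {F : ℝ × ℝ → ℝ}
    (hF : Continuous F) :
    rInt x0 x1 y0 y1 F = ∫ x in x0..x1, ∫ y in y0..y1, F (x, y) := by
  have hint := integrableOn_rect_of_continuous (x0 := x0) (x1 := x1) (y0 := y0) (y1 := y1) hF
  rw [Measure.volume_eq_prod] at hint
  simp only [rInt, Measure.volume_eq_prod, setIntegral_prod _ hint,
    intervalIntegral.integral_of_le hx, intervalIntegral.integral_of_le hy,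
    integral_Ioc_eq_integral_Ioo]

theorem rBd_sub {F G : ℝ × ℝ → ℝ} (hF : Continuous F) (hG : Continuous G) :
    rBd x0 x1 y0 y1 (fun z => F z - G z) = rBd x0 x1 y0 y1 F - rBd x0 x1 y0 y1 G := by
  have edge (a b : ℝ) (γ : ℝ → ℝ × ℝ) (hγ : Continuous γ) :
      ∫ t in a..b, F (γ t) - G (γ t) = (∫ t in a..b, F (γ t)) - ∫ t in a..b, G (γ t) :=
    intervalIntegral.integral_sub ((hF.comp hγ).intervalIntegrable a b)
      ((hG.comp hγ).intervalIntegrable a b)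
  simp only [rBd]
  rw [edge _ _ (fun t => (t, y0)) (by fun_prop), edge _ _ (fun t => (t, y1)) (by fun_prop),
    edge _ _ (fun t => (x0, t)) (by fun_prop), edge _ _ (fun t => (x1, t)) (by fun_prop)]
  ring

theorem rBd_const_mul (c : ℝ) (F : ℝ × ℝ → ℝ) :
    rBd x0 x1 y0 y1 (fun z => c * F z) = c * rBd x0 x1 y0 y1 F := by
  simp only [rBd, intervalIntegral.integral_const_mul]
  ring

theorem rInt_div2 (hx : x0 ≤ x1) (hy : y0 ≤ y1) {F : ℝ × ℝ → ℝ × ℝ}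
    (hF : ContDiff ℝ 1 F) :
    rInt x0 x1 y0 y1 (div2 F) = rBdN x0 x1 y0 y1 F := by
  have h1 : ContDiff ℝ 1 (fun w => (F w).1) := contDiff_fst.comp hF
  have h2 : ContDiff ℝ 1 (fun w => (F w).2) := contDiff_snd.comp hF
  rw [rInt_eq_intervalIntegral hx hy (continuous_div2 hF)]
  simp only [div2]
  rw [integral2_divergence_prod_of_hasFDerivAt _ _ _ _ x0 y0 x1 y1
    h1.continuous.continuousOn h2.continuous.continuousOn
    (fun z _ => (h1.differentiable one_ne_zero z).hasFDerivAt)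
    (fun z _ => (h2.differentiable one_ne_zero z).hasFDerivAt)
    ((continuous_div2 hF).continuousOn.integrableOn_compact (isCompact_uIcc.prod isCompact_uIcc))]
  simp only [rBdN, intervalIntegral.integral_neg]
  ring

theorem rInt_green (hx : x0 ≤ x1) (hy : y0 ≤ y1) {φ P Q : ℝ × ℝ → ℝ}
    (hφ : ContDiff ℝ 1 φ) (hP : ContDiff ℝ 1 P) (hQ : ContDiff ℝ 1 Q) :
    rInt x0 x1 y0 y1 (fun z => fderiv ℝ φ z (1, 0) * P z + fderiv ℝ φ z (0, 1) * Q z +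
        φ z * div2 (fun w => (P w, Q w)) z) =
      rBdN x0 x1 y0 y1 (fun z => (φ z * P z, φ z * Q z)) := by
  rw [← rInt_div2 hx hy ((hφ.mul hP).prodMk (hφ.mul hQ))]
  congr 1
  funext z
  have hdiff {f : ℝ × ℝ → ℝ} (hf : ContDiff ℝ 1 f) := hf.differentiable one_ne_zero z
  rw [div2_mul (hdiff hφ) (hdiff hP) (hdiff hQ)]

end Rectangle

theorem integral_quadratic_symm (r c0 c1 c2 : ℝ) {f : ℝ → ℝ}
    (hf : ∀ t, f t = c0 + c1 * t + c2 * t ^ 2) :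
    ∫ t in -r..r, f t = 2 * r * c0 + 2 * r ^ 3 / 3 * c2 := by
  have h1 : IntervalIntegrable (fun t : ℝ => c1 * t) volume (-r) r := by
    apply Continuous.intervalIntegrable; fun_prop
  have h2 : IntervalIntegrable (fun t : ℝ => c2 * t ^ 2) volume (-r) r := by
    apply Continuous.intervalIntegrable; fun_prop
  simp only [hf]
  rw [intervalIntegral.integral_add (intervalIntegrable_const.add h1) h2,
    intervalIntegral.integral_add intervalIntegrable_const h1, intervalIntegral.integral_const,
    intervalIntegral.integral_const_mul, intervalIntegral.integral_const_mul, integral_id,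
    integral_pow, smul_eq_mul]
  ring

theorem rInt_fst_mul_snd_symm {r s : ℝ} (hr : 0 ≤ r) (hs : 0 ≤ s) :
    rInt (-r) r (-s) s (fun z => z.1 * z.2) = 0 := by
  rw [rInt_eq_intervalIntegral (by linarith) (by linarith) (by fun_prop)]
  have inner (x : ℝ) : ∫ y in -s..s, x * y = 0 := by
    rw [intervalIntegral.integral_const_mul, integral_id]
    ring
  simp only [inner, intervalIntegral.integral_zero]

theorem rBd_fst_mul_snd_mul_affine_symm (r s v0 v1 v2 : ℝ) :
    rBd (-r) r (-s) s (fun z => z.1 * z.2 * (v0 + v1 * z.1 + v2 * z.2)) = 0 := by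
  simp only [rBd]
  rw [integral_quadratic_symm r 0 (-s * (v0 - v2 * s)) (-s * v1) (fun t => by ring),
    integral_quadratic_symm r 0 (s * (v0 + v2 * s)) (s * v1) (fun t => by ring),
    integral_quadratic_symm s 0 (-r * (v0 - v1 * r)) (-r * v2) (fun t => by ring),
    integral_quadratic_symm s 0 (r * (v0 + v1 * r)) (r * v2) (fun t => by ring)]
  ring

section TensorAffineData

variable {a b c d r s : ℝ} {g u : ℝ × ℝ → ℝ} {q : ℝ × ℝ → ℝ × ℝ}

theorem sub_eq_mul_fst_mul_snd (hg : ∀ z, g z = (a * z.1 + b) * (c * z.2 + d))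
    (hu : ∀ z, u z = a * d * z.1 + b * c * z.2 + b * d) (z : ℝ × ℝ) :
    g z - u z = a * c * (z.1 * z.2) := by
  rw [hg, hu]
  ring

theorem flux_equation (hr : 0 ≤ r) (hs : 0 ≤ s)
    (hg : ∀ z, g z = (a * z.1 + b) * (c * z.2 + d))
    (hu : ∀ z, u z = a * d * z.1 + b * c * z.2 + b * d)
    (hq : ∀ z, q z = (-(a * (c * z.2 + d)), -(c * (a * z.1 + b))))
    (p0 p1 p2 p3 p4 p5 : ℝ) :
    rInt (-r) r (-s) s (fun z => (q z).1 * (p0 + p1 * z.1 + p2 * z.2) +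
        (q z).2 * (p3 + p4 * z.1 + p5 * z.2)) -
      rInt (-r) r (-s) s (fun z => u z * (p1 + p5)) =
    -rBdN (-r) r (-s) s (fun z => (g z * (p0 + p1 * z.1 + p2 * z.2),
        g z * (p3 + p4 * z.1 + p5 * z.2))) := by
  have hgC : ContDiff ℝ 1 g := by rw [funext hg]; fun_prop
  have hgc := hgC.continuous
  have huc : Continuous u := by rw [funext hu]; fun_prop
  have hqc : Continuous q := by rw [funext hq]; fun_prop
  have hgreen (z : ℝ × ℝ) :
      fderiv ℝ g z (1, 0) * (p0 + p1 * z.1 + p2 * z.2) +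
          fderiv ℝ g z (0, 1) * (p3 + p4 * z.1 + p5 * z.2) +
          g z * div2 (fun w => (p0 + p1 * w.1 + p2 * w.2, p3 + p4 * w.1 + p5 * w.2)) z =
        g z * (p1 + p5) -
          ((q z).1 * (p0 + p1 * z.1 + p2 * z.2) + (q z).2 * (p3 + p4 * z.1 + p5 * z.2)) := by
    rw [funext hg, (hasFDerivAt_affine_mul_affine a b c d z).fderiv, div2_affine, hq]
    simp only [add_apply, smul_apply,
      ContinuousLinearMap.coe_fst', ContinuousLinearMap.coe_snd', smul_eq_mul]
    ring
  have hvanish :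
      rInt (-r) r (-s) s (fun z => g z * (p1 + p5)) -
        rInt (-r) r (-s) s (fun z => u z * (p1 + p5)) = 0 := by
    rw [← rInt_sub (by fun_prop) (by fun_prop)]
    simp only [← sub_mul, sub_eq_mul_fst_mul_snd hg hu, mul_right_comm _ _ (p1 + p5)]
    rw [rInt_const_mul, rInt_fst_mul_snd_symm hr hs, mul_zero]
  rw [← rInt_green (by linarith) (by linarith) hgC (by fun_prop) (by fun_prop)]
  simp only [hgreen]
  rw [rInt_sub (by fun_prop) (by fun_prop)]
  linarith

theorem conservation_equation (hg : ∀ z, g z = (a * z.1 + b) * (c * z.2 + d))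
    (hu : ∀ z, u z = a * d * z.1 + b * c * z.2 + b * d)
    (hq : ∀ z, q z = (-(a * (c * z.2 + d)), -(c * (a * z.1 + b))))
    (τ v0 v1 v2 : ℝ) :
    rInt (-r) r (-s) s (fun z => (v0 + v1 * z.1 + v2 * z.2) * div2 q z) +
        τ * rBd (-r) r (-s) s (fun z => u z * (v0 + v1 * z.1 + v2 * z.2)) =
      τ * rBd (-r) r (-s) s (fun z => g z * (v0 + v1 * z.1 + v2 * z.2)) := by
  have hdiv (z : ℝ × ℝ) : div2 q z = 0 := by
    have hq' : q = fun w => (-(a * d) + 0 * w.1 + -(a * c) * w.2,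
        -(c * b) + -(c * a) * w.1 + 0 * w.2) := by
      funext w
      rw [hq]
      ext <;> ring
    rw [hq', div2_affine, add_zero]
  have hbd : rBd (-r) r (-s) s (fun z => u z * (v0 + v1 * z.1 + v2 * z.2)) =
      rBd (-r) r (-s) s (fun z => g z * (v0 + v1 * z.1 + v2 * z.2)) := by
    have hsplit (z : ℝ × ℝ) : u z * (v0 + v1 * z.1 + v2 * z.2) =
        g z * (v0 + v1 * z.1 + v2 * z.2) - a * c * (z.1 * z.2 * (v0 + v1 * z.1 + v2 * z.2)) := by
      linear_combination -(v0 + v1 * z.1 + v2 * z.2) * sub_eq_mul_fst_mul_snd hg hu z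
    have hgc : Continuous g := by rw [funext hg]; fun_prop
    simp only [hsplit]
    rw [rBd_sub (by fun_prop) (by fun_prop), rBd_const_mul, rBd_fst_mul_snd_mul_affine_symm,
      mul_zero, sub_zero]
  simp only [hdiv, mul_zero, hbd]
  simp [rInt]

end TensorAffineData

theorem stmt_12_general (hx hy τ : ℝ) (hhx : 0 < hx) (hhy : 0 < hy)
    (g u : ℝ × ℝ → ℝ) (q : ℝ × ℝ → ℝ × ℝ)
    (hg : ∀ z, g z = (2 * z.1 + hx) * (2 * z.2 + hy))
    (hu : ∀ z, u z = 2 * hy * z.1 + 2 * hx * z.2 + hx * hy)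
    (hq : ∀ z, q z = (-(2 * (2 * z.2 + hy)), -(2 * (2 * z.1 + hx)))) :
    (∀ z ∈ Set.Icc (-(hx / 2)) (hx / 2) ×ˢ Set.Icc (-(hy / 2)) (hy / 2), 0 ≤ g z) ∧
    (∀ p0 p1 p2 p3 p4 p5 : ℝ,
      rInt (-(hx / 2)) (hx / 2) (-(hy / 2)) (hy / 2)
          (fun z => (q z).1 * (p0 + p1 * z.1 + p2 * z.2) +
            (q z).2 * (p3 + p4 * z.1 + p5 * z.2)) -
        rInt (-(hx / 2)) (hx / 2) (-(hy / 2)) (hy / 2) (fun z => u z * (p1 + p5)) =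
      -rBdN (-(hx / 2)) (hx / 2) (-(hy / 2)) (hy / 2)
          (fun z => (g z * (p0 + p1 * z.1 + p2 * z.2),
            g z * (p3 + p4 * z.1 + p5 * z.2)))) ∧
    (∀ v0 v1 v2 : ℝ,
      rInt (-(hx / 2)) (hx / 2) (-(hy / 2)) (hy / 2)
          (fun z => (v0 + v1 * z.1 + v2 * z.2) * div2 q z) +
        τ * rBd (-(hx / 2)) (hx / 2) (-(hy / 2)) (hy / 2)
          (fun z => u z * (v0 + v1 * z.1 + v2 * z.2)) =
      τ * rBd (-(hx / 2)) (hx / 2) (-(hy / 2)) (hy / 2)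
          (fun z => g z * (v0 + v1 * z.1 + v2 * z.2))) ∧
    u (-(hx / 2), -(hy / 2)) = -(hx * hy) ∧ -(hx * hy) < 0 := by
  have hu' (z : ℝ × ℝ) : u z = 2 * hy * z.1 + hx * 2 * z.2 + hx * hy := by
    rw [hu]
    ring
  refine ⟨?_, flux_equation (by positivity) (by positivity) hg hu' hq,
    conservation_equation hg hu' hq τ, by rw [hu]; ring, neg_neg_of_pos (mul_pos hhx hhy)⟩
  rintro z ⟨⟨hz1, -⟩, hz2, -⟩
  rw [hg]
  apply mul_nonneg <;> linarith

/-- counterexample on one rectangle for P₁ × P₁² × P₁: the displayed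
(u_h, q_h) solve the local HDG equations with λ_h = g, yet u_h takes the negative
value −h_x h_y at a corner; also g ≥ 0 on the closed rectangle. -/
theorem stmt_12 (hx hy τ : ℝ) (hhx : 0 < hx) (hhy : 0 < hy) (hτ : 0 < τ)
    (g u : ℝ × ℝ → ℝ) (q : ℝ × ℝ → ℝ × ℝ)
    (hg : ∀ z, g z = (2 * z.1 + hx) * (2 * z.2 + hy))
    (hu : ∀ z, u z = 2 * hy * z.1 + 2 * hx * z.2 + hx * hy)
    (hq : ∀ z, q z = (-(2 * (2 * z.2 + hy)), -(2 * (2 * z.1 + hx)))) :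
    (∀ z ∈ Set.Icc (-(hx / 2)) (hx / 2) ×ˢ Set.Icc (-(hy / 2)) (hy / 2), 0 ≤ g z) ∧
    (∀ p0 p1 p2 p3 p4 p5 : ℝ,
      rInt (-(hx / 2)) (hx / 2) (-(hy / 2)) (hy / 2)
          (fun z => (q z).1 * (p0 + p1 * z.1 + p2 * z.2) +
            (q z).2 * (p3 + p4 * z.1 + p5 * z.2)) -
        rInt (-(hx / 2)) (hx / 2) (-(hy / 2)) (hy / 2) (fun z => u z * (p1 + p5)) =
      -rBdN (-(hx / 2)) (hx / 2) (-(hy / 2)) (hy / 2)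
          (fun z => (g z * (p0 + p1 * z.1 + p2 * z.2),
            g z * (p3 + p4 * z.1 + p5 * z.2)))) ∧
    (∀ v0 v1 v2 : ℝ,
      rInt (-(hx / 2)) (hx / 2) (-(hy / 2)) (hy / 2)
          (fun z => (v0 + v1 * z.1 + v2 * z.2) * div2 q z) +
        τ * rBd (-(hx / 2)) (hx / 2) (-(hy / 2)) (hy / 2)
          (fun z => u z * (v0 + v1 * z.1 + v2 * z.2)) =
      τ * rBd (-(hx / 2)) (hx / 2) (-(hy / 2)) (hy / 2)
          (fun z => g z * (v0 + v1 * z.1 + v2 * z.2))) ∧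
    u (-(hx / 2), -(hy / 2)) = -(hx * hy) ∧ -(hx * hy) < 0 :=
  stmt_12_general hx hy τ hhx hhy g u q hg hu hq
end

section
/- (Counterexample, unit square, P₁×Q₁²×P₁.) Let E = (−1/2,1/2)², κ = 1, f = 0, and g(x,y) = (x+1/2)(y+1/2) ≥ 0 on the closure of E. Define u_h(x,y) = (x+y)/2 + 1/4 and q_h(x,y) = −(y+1/2, x+1/2). Then (i) ∫_E q_h·p − ∫_E u_h div p = −∫_{∂E} g (p·n) dσ for all p ∈ Q₁(E)², and (ii) ∫_E v div q_h + τ∫_{∂E} u_h v dσ = τ∫_{∂E} g v dσ for all v ∈ P₁(E) and any τ > 0; moreover u_h(−1/2,−1/2) = −1/4 < 0. -/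
/-!
Since `q_h = -∇g` and `g - u_h = xy`, Green's formula turns (i) into `∫_E xy div p = 0`, which
holds because `div Q₁(E)² = P₁(E)` consists of functions orthogonal to `xy` on the centred
square; and since `div q_h = 0`, (ii) reduces to `∫_{∂E} xy v dσ = 0` for `v ∈ P₁(E)`, which
holds by symmetry. The verification itself is direct: every integral involved is a polynomial
integral with an explicit value.
-/

open MeasureTheory

theorem rInt_eq_intervalIntegral_intervalIntegral {x0 x1 y0 y1 : ℝ} (hx : x0 ≤ x1)
    (hy : y0 ≤ y1) {F : ℝ × ℝ → ℝ} (hF : Continuous F) :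
    rInt x0 x1 y0 y1 F = ∫ x in x0..x1, ∫ y in y0..y1, F (x, y) := by
  have hI : IntegrableOn F (Set.Ioo x0 x1 ×ˢ Set.Ioo y0 y1) :=
    (hF.continuousOn.integrableOn_compact (isCompact_Icc.prod isCompact_Icc)).mono_set
      (Set.prod_mono Set.Ioo_subset_Icc_self Set.Ioo_subset_Icc_self)
  simp only [rInt, Measure.volume_eq_prod, setIntegral_prod _ hI,
    intervalIntegral.integral_of_le hx, intervalIntegral.integral_of_le hy,
    integral_Ioc_eq_integral_Ioo]

theorem div2_neg_grad_mul_eq_zero (a b : ℝ) (z : ℝ × ℝ) :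
    div2 (fun w => (-(w.2 + a), -(w.1 + b))) z = 0 := by
  simp [div2, fderiv_fst, fderiv_snd]

theorem rInt_q_mul_Q1 (a1 b1 c1 d1 a2 b2 c2 d2 : ℝ) :
    rInt (-(1 / 2)) (1 / 2) (-(1 / 2)) (1 / 2)
        (fun z => -(z.2 + 1 / 2) * (a1 + b1 * z.1 + c1 * z.2 + d1 * z.1 * z.2) +
          -(z.1 + 1 / 2) * (a2 + b2 * z.1 + c2 * z.2 + d2 * z.1 * z.2)) =
      -(a1 + a2) / 2 - (b2 + c1) / 12 := by
  rw [rInt_eq_intervalIntegral_intervalIntegral (by norm_num) (by norm_num) (by fun_prop)]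
  ring_nf
  -- `(𝕜 := ℝ)`: otherwise `simp` fails to unify the `NormedAlgebra ℝ ℝ` instance.
  simp (disch := apply Continuous.intervalIntegrable; fun_prop) only
    [intervalIntegral.integral_add, intervalIntegral.integral_sub,
      intervalIntegral.integral_mul_const, intervalIntegral.integral_const_mul (𝕜 := ℝ),
      integral_pow, integral_id, intervalIntegral.integral_const, intervalIntegral.integral_neg,
      smul_eq_mul]
  ring

theorem rInt_u_mul_div_Q1 (b1 d1 c2 d2 : ℝ) :
    rInt (-(1 / 2)) (1 / 2) (-(1 / 2)) (1 / 2)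
        (fun z => ((z.1 + z.2) / 2 + 1 / 4) * ((b1 + d1 * z.2) + (c2 + d2 * z.1))) =
      (b1 + c2) / 4 + (d1 + d2) / 24 := by
  rw [rInt_eq_intervalIntegral_intervalIntegral (by norm_num) (by norm_num) (by fun_prop)]
  ring_nf
  simp (disch := apply Continuous.intervalIntegrable; fun_prop) only
    [intervalIntegral.integral_add, intervalIntegral.integral_mul_const,
      intervalIntegral.integral_const_mul (𝕜 := ℝ), integral_pow, integral_id,
      intervalIntegral.integral_const, smul_eq_mul]
  ring

theorem rBdN_g_mul_Q1 (a1 b1 c1 d1 a2 b2 c2 d2 : ℝ) :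
    rBdN (-(1 / 2)) (1 / 2) (-(1 / 2)) (1 / 2)
        (fun z => ((z.1 + 1 / 2) * (z.2 + 1 / 2) * (a1 + b1 * z.1 + c1 * z.2 + d1 * z.1 * z.2),
          (z.1 + 1 / 2) * (z.2 + 1 / 2) * (a2 + b2 * z.1 + c2 * z.2 + d2 * z.1 * z.2))) =
      (a1 + a2) / 2 + (b1 + c2) / 4 + (b2 + c1) / 12 + (d1 + d2) / 24 := by
  simp only [rBdN]
  ring_nf
  simp (disch := apply Continuous.intervalIntegrable; fun_prop) only
    [intervalIntegral.integral_add, intervalIntegral.integral_mul_const,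
      intervalIntegral.integral_const_mul (𝕜 := ℝ), integral_pow, integral_id,
      intervalIntegral.integral_const, smul_eq_mul]
  ring

theorem rBd_u_mul_P1 (v0 v1 v2 : ℝ) :
    rBd (-(1 / 2)) (1 / 2) (-(1 / 2)) (1 / 2)
        (fun z => ((z.1 + z.2) / 2 + 1 / 4) * (v0 + v1 * z.1 + v2 * z.2)) =
      v0 + (v1 + v2) / 3 := by
  simp only [rBd]
  ring_nf
  simp (disch := apply Continuous.intervalIntegrable; fun_prop) only
    [intervalIntegral.integral_add, intervalIntegral.integral_mul_const,
      intervalIntegral.integral_const_mul (𝕜 := ℝ), integral_pow, integral_id,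
      intervalIntegral.integral_const, smul_eq_mul]
  ring

theorem rBd_g_mul_P1 (v0 v1 v2 : ℝ) :
    rBd (-(1 / 2)) (1 / 2) (-(1 / 2)) (1 / 2)
        (fun z => (z.1 + 1 / 2) * (z.2 + 1 / 2) * (v0 + v1 * z.1 + v2 * z.2)) =
      v0 + (v1 + v2) / 3 := by
  simp only [rBd]
  ring_nf
  simp (disch := apply Continuous.intervalIntegrable; fun_prop) only
    [intervalIntegral.integral_add, intervalIntegral.integral_mul_const,
      intervalIntegral.integral_const_mul (𝕜 := ℝ), integral_pow, integral_id,
      intervalIntegral.integral_const, smul_eq_mul]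
  ring

theorem stmt_13_general (τ : ℝ)
    (g u : ℝ × ℝ → ℝ) (q : ℝ × ℝ → ℝ × ℝ)
    (hg : ∀ z, g z = (z.1 + 1 / 2) * (z.2 + 1 / 2))
    (hu : ∀ z, u z = (z.1 + z.2) / 2 + 1 / 4)
    (hq : ∀ z, q z = (-(z.2 + 1 / 2), -(z.1 + 1 / 2))) :
    (∀ z ∈ Set.Icc (-(1 / 2 : ℝ)) (1 / 2) ×ˢ Set.Icc (-(1 / 2 : ℝ)) (1 / 2), 0 ≤ g z) ∧
    -- (i) tested with all p ∈ Q₁(E)², p_k(x,y) = a_k + b_k x + c_k y + d_k xy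
    (∀ a1 b1 c1 d1 a2 b2 c2 d2 : ℝ,
      rInt (-(1 / 2)) (1 / 2) (-(1 / 2)) (1 / 2)
          (fun z => (q z).1 * (a1 + b1 * z.1 + c1 * z.2 + d1 * z.1 * z.2) +
            (q z).2 * (a2 + b2 * z.1 + c2 * z.2 + d2 * z.1 * z.2)) -
        rInt (-(1 / 2)) (1 / 2) (-(1 / 2)) (1 / 2)
          (fun z => u z * ((b1 + d1 * z.2) + (c2 + d2 * z.1))) =
      -rBdN (-(1 / 2)) (1 / 2) (-(1 / 2)) (1 / 2)
          (fun z => (g z * (a1 + b1 * z.1 + c1 * z.2 + d1 * z.1 * z.2),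
            g z * (a2 + b2 * z.1 + c2 * z.2 + d2 * z.1 * z.2)))) ∧
    -- (ii) tested with all v ∈ P₁(E)
    (∀ v0 v1 v2 : ℝ,
      rInt (-(1 / 2)) (1 / 2) (-(1 / 2)) (1 / 2)
          (fun z => (v0 + v1 * z.1 + v2 * z.2) * div2 q z) +
        τ * rBd (-(1 / 2)) (1 / 2) (-(1 / 2)) (1 / 2)
          (fun z => u z * (v0 + v1 * z.1 + v2 * z.2)) =
      τ * rBd (-(1 / 2)) (1 / 2) (-(1 / 2)) (1 / 2)
          (fun z => g z * (v0 + v1 * z.1 + v2 * z.2))) ∧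
    u (-(1 / 2), -(1 / 2)) = -(1 / 4) ∧ (-(1 / 4) : ℝ) < 0 := by
  obtain rfl : g = _ := funext hg
  obtain rfl : u = _ := funext hu
  obtain rfl : q = _ := funext hq
  dsimp only
  refine ⟨?_, fun a1 b1 c1 d1 a2 b2 c2 d2 => ?_, fun v0 v1 v2 => ?_, by norm_num, by norm_num⟩
  · rintro z ⟨⟨hx, -⟩, ⟨hy, -⟩⟩
    exact mul_nonneg (by linarith) (by linarith)
  · rw [rInt_q_mul_Q1, rInt_u_mul_div_Q1, rBdN_g_mul_Q1]
    ring
  · simp only [div2_neg_grad_mul_eq_zero, mul_zero, rInt, integral_zero, zero_add,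
      rBd_u_mul_P1, rBd_g_mul_P1]

/-- counterexample on the unit square E = (−1/2,1/2)² for
P₁ × Q₁² × P₁: u_h(x,y) = (x+y)/2 + 1/4 and q_h = −(y+1/2, x+1/2) solve the local
HDG equations with λ_h = g = (x+1/2)(y+1/2), yet u_h(−1/2,−1/2) = −1/4 < 0. -/
theorem stmt_13 (τ : ℝ) (hτ : 0 < τ)
    (g u : ℝ × ℝ → ℝ) (q : ℝ × ℝ → ℝ × ℝ)
    (hg : ∀ z, g z = (z.1 + 1 / 2) * (z.2 + 1 / 2))
    (hu : ∀ z, u z = (z.1 + z.2) / 2 + 1 / 4)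
    (hq : ∀ z, q z = (-(z.2 + 1 / 2), -(z.1 + 1 / 2))) :
    (∀ z ∈ Set.Icc (-(1 / 2 : ℝ)) (1 / 2) ×ˢ Set.Icc (-(1 / 2 : ℝ)) (1 / 2), 0 ≤ g z) ∧
    -- (i) tested with all p ∈ Q₁(E)², p_k(x,y) = a_k + b_k x + c_k y + d_k xy
    (∀ a1 b1 c1 d1 a2 b2 c2 d2 : ℝ,
      rInt (-(1 / 2)) (1 / 2) (-(1 / 2)) (1 / 2)
          (fun z => (q z).1 * (a1 + b1 * z.1 + c1 * z.2 + d1 * z.1 * z.2) +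
            (q z).2 * (a2 + b2 * z.1 + c2 * z.2 + d2 * z.1 * z.2)) -
        rInt (-(1 / 2)) (1 / 2) (-(1 / 2)) (1 / 2)
          (fun z => u z * ((b1 + d1 * z.2) + (c2 + d2 * z.1))) =
      -rBdN (-(1 / 2)) (1 / 2) (-(1 / 2)) (1 / 2)
          (fun z => (g z * (a1 + b1 * z.1 + c1 * z.2 + d1 * z.1 * z.2),
            g z * (a2 + b2 * z.1 + c2 * z.2 + d2 * z.1 * z.2)))) ∧
    -- (ii) tested with all v ∈ P₁(E)
    (∀ v0 v1 v2 : ℝ,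
      rInt (-(1 / 2)) (1 / 2) (-(1 / 2)) (1 / 2)
          (fun z => (v0 + v1 * z.1 + v2 * z.2) * div2 q z) +
        τ * rBd (-(1 / 2)) (1 / 2) (-(1 / 2)) (1 / 2)
          (fun z => u z * (v0 + v1 * z.1 + v2 * z.2)) =
      τ * rBd (-(1 / 2)) (1 / 2) (-(1 / 2)) (1 / 2)
          (fun z => g z * (v0 + v1 * z.1 + v2 * z.2))) ∧
    u (-(1 / 2), -(1 / 2)) = -(1 / 4) ∧ (-(1 / 4) : ℝ) < 0 :=
  stmt_13_general τ g u q hg hu hq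
end

section
/- (Counterexample, two unit squares, RT₀ with τ = 0.) Let E₁ = (0,1)², E₂ = (1,2)×(0,1), with common edge N₁₂ = {1}×(0,1), κ = 1, f = 0, and Dirichlet data g = 10 on {0}×(0,1) and g = 0 on the rest of the outer boundary. Then the HDG solution with piecewise constant u and λ and rectangular RT₀ fluxes, τ = 0, is u_h|_{E₁} = 9/4, u_h|_{E₂} = −1/4, λ_h|_{N₁₂} = −1, with q_h|_{E₁}(x,y) = (11 − 27(x−1/2), 27(y−1/2)) and q_h|_{E₂}(x,y) = (−1 + 3(x−3/2), −3(y−1/2)). In particular, λ_h and u_h attain negative values. -/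
/-!
All fields involved are rectangular RT₀ fields `(c₁ + a₁ x, c₂ + a₂ y)`. Such a field has
constant divergence `a₁ + a₂`, and its L² pairing with another one splits into one-dimensional
integrals of products of affine functions. Each HDG equation thus reduces to a polynomial
identity in the coefficients of the test field.
-/

open MeasureTheory

def rt0 (c₁ a₁ c₂ a₂ : ℝ) (z : ℝ × ℝ) : ℝ × ℝ := (c₁ + a₁ * z.1, c₂ + a₂ * z.2)

theorem div2_rt0 (c₁ a₁ c₂ a₂ : ℝ) (z : ℝ × ℝ) : div2 (rt0 c₁ a₁ c₂ a₂) z = a₁ + a₂ := by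
  have h₁ : HasFDerivAt (fun w : ℝ × ℝ => c₁ + a₁ * w.1)
      (a₁ • ContinuousLinearMap.fst ℝ ℝ ℝ) z :=
    (hasFDerivAt_fst.const_mul a₁).const_add c₁
  have h₂ : HasFDerivAt (fun w : ℝ × ℝ => c₂ + a₂ * w.2)
      (a₂ • ContinuousLinearMap.snd ℝ ℝ ℝ) z :=
    (hasFDerivAt_snd.const_mul a₂).const_add c₂
  simp [div2, rt0, h₁.fderiv, h₂.fderiv]

theorem integral_affine_mul_affine (a b c d x₀ x₁ : ℝ) :
    ∫ x in x₀..x₁, (a + b * x) * (c + d * x) =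
      a * c * (x₁ - x₀) + (a * d + b * c) * (x₁ ^ 2 - x₀ ^ 2) / 2 +
        b * d * (x₁ ^ 3 - x₀ ^ 3) / 3 := by
  have hderiv : ∀ x : ℝ,
      HasDerivAt (fun x => a * c * x + (a * d + b * c) * (x ^ 2 / 2) + b * d * (x ^ 3 / 3))
        ((a + b * x) * (c + d * x)) x := by
    intro x
    refine HasDerivAt.congr_deriv ((((hasDerivAt_id x).const_mul (a * c)).add
      (((hasDerivAt_pow 2 x).div_const 2).const_mul (a * d + b * c))).add
      (((hasDerivAt_pow 3 x).div_const 3).const_mul (b * d))) ?_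
    simp only [Nat.cast_ofNat]; ring
  rw [intervalIntegral.integral_eq_sub_of_hasDerivAt (fun x _ => hderiv x)
    (Continuous.intervalIntegrable (by fun_prop) _ _)]
  ring

theorem rInt_const {x₀ x₁ y₀ y₁ : ℝ} (hx : x₀ ≤ x₁) (hy : y₀ ≤ y₁) (c : ℝ) :
    rInt x₀ x₁ y₀ y₁ (fun _ => c) = (x₁ - x₀) * (y₁ - y₀) * c := by
  simp [rInt, Measure.volume_eq_prod, Measure.prod_prod, Real.volume_Ioo, measureReal_def, hx,
    hy]

theorem rInt_fst_add_snd {x₀ x₁ y₀ y₁ : ℝ} (hx : x₀ ≤ x₁) (hy : y₀ ≤ y₁) {A B : ℝ → ℝ}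
    (hA : Continuous A) (hB : Continuous B) :
    rInt x₀ x₁ y₀ y₁ (fun z => A z.1 + B z.2) =
      (y₁ - y₀) * (∫ x in x₀..x₁, A x) + (x₁ - x₀) * ∫ y in y₀..y₁, B y := by
  have hint : ∀ F : ℝ × ℝ → ℝ, Continuous F →
      IntegrableOn F (Set.Ioo x₀ x₁ ×ˢ Set.Ioo y₀ y₁) := fun F hF =>
    (hF.continuousOn.integrableOn_compact (isCompact_Icc.prod isCompact_Icc)).mono_set
      (Set.prod_mono Set.Ioo_subset_Icc_self Set.Ioo_subset_Icc_self)
  have hfst : ∫ z in Set.Ioo x₀ x₁ ×ˢ Set.Ioo y₀ y₁, A z.1 =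
      (y₁ - y₀) * ∫ x in x₀..x₁, A x := by
    simpa [← Measure.volume_eq_prod, intervalIntegral.integral_of_le hx,
      integral_Ioc_eq_integral_Ioo, measureReal_def, hy, mul_comm] using
      setIntegral_prod_mul (μ := volume) (ν := volume) A (fun _ => (1 : ℝ))
        (Set.Ioo x₀ x₁) (Set.Ioo y₀ y₁)
  have hsnd : ∫ z in Set.Ioo x₀ x₁ ×ˢ Set.Ioo y₀ y₁, B z.2 =
      (x₁ - x₀) * ∫ y in y₀..y₁, B y := by
    simpa [← Measure.volume_eq_prod, intervalIntegral.integral_of_le hy,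
      integral_Ioc_eq_integral_Ioo, measureReal_def, hx] using
      setIntegral_prod_mul (μ := volume) (ν := volume) (fun _ => (1 : ℝ)) B
        (Set.Ioo x₀ x₁) (Set.Ioo y₀ y₁)
  rw [rInt, integral_add (hint _ (by fun_prop)) (hint _ (by fun_prop)), hfst, hsnd]

theorem rInt_rt0_pairing {x₀ x₁ y₀ y₁ : ℝ} (hx : x₀ ≤ x₁) (hy : y₀ ≤ y₁)
    (c₁ a₁ c₂ a₂ d₁ b₁ d₂ b₂ : ℝ) :
    rInt x₀ x₁ y₀ y₁ (fun z => (rt0 c₁ a₁ c₂ a₂ z).1 * (d₁ + b₁ * z.1) +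
        (rt0 c₁ a₁ c₂ a₂ z).2 * (d₂ + b₂ * z.2)) =
      (y₁ - y₀) * (c₁ * d₁ * (x₁ - x₀) + (c₁ * b₁ + a₁ * d₁) * (x₁ ^ 2 - x₀ ^ 2) / 2 +
          a₁ * b₁ * (x₁ ^ 3 - x₀ ^ 3) / 3) +
        (x₁ - x₀) * (c₂ * d₂ * (y₁ - y₀) + (c₂ * b₂ + a₂ * d₂) * (y₁ ^ 2 - y₀ ^ 2) / 2 +
          a₂ * b₂ * (y₁ ^ 3 - y₀ ^ 3) / 3) := by
  rw [← integral_affine_mul_affine, ← integral_affine_mul_affine]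
  exact rInt_fst_add_snd (A := fun x => (c₁ + a₁ * x) * (d₁ + b₁ * x))
    (B := fun y => (c₂ + a₂ * y) * (d₂ + b₂ * y)) hx hy (by fun_prop) (by fun_prop)

/-- counterexample for P₀ × RT₀ × P₀ with τ = 0 on the two unit squares
E₁ = (0,1)², E₂ = (1,2) × (0,1) with κ = 1, f = 0, Dirichlet data 10 on {0} × (0,1)
and 0 on the rest of the outer boundary.  The displayed (u_h, q_h, λ_h) with
u_h|E₁ = 9/4, u_h|E₂ = −1/4, λ_h|N₁₂ = −1 satisfy the HDG equations (local equations
tested with all rectangular RT₀ fields p = (c₁ + a₁ x, c₂ + a₂ y), elementwise mass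
balance, and conservation of the normal flux across N₁₂); λ_h and u_h are negative. -/
theorem stmt_14 (u1 u2 lam12 : ℝ) (q1 q2 : ℝ × ℝ → ℝ × ℝ)
    (hu1 : u1 = 9 / 4) (hu2 : u2 = -(1 / 4)) (hlam : lam12 = -1)
    (hq1 : ∀ z, q1 z = (11 - 27 * (z.1 - 1 / 2), 27 * (z.2 - 1 / 2)))
    (hq2 : ∀ z, q2 z = (-1 + 3 * (z.1 - 3 / 2), -3 * (z.2 - 1 / 2))) :
    -- local flux equation on E₁ (λ = 0 on top and bottom, 10 on the left, lam12 on
    -- the right edge)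
    (∀ c1 a1 c2 a2 : ℝ,
      rInt 0 1 0 1 (fun z => (q1 z).1 * (c1 + a1 * z.1) + (q1 z).2 * (c2 + a2 * z.2)) -
        rInt 0 1 0 1 (fun _z => u1 * (a1 + a2)) =
      -((∫ t in (0:ℝ)..1, (0 : ℝ) * (-(c2 + a2 * (0:ℝ)))) +
        (∫ t in (0:ℝ)..1, (0 : ℝ) * (c2 + a2 * 1)) +
        (∫ t in (0:ℝ)..1, 10 * (-(c1 + a1 * (0:ℝ)))) +
        (∫ t in (0:ℝ)..1, lam12 * (c1 + a1 * 1)))) ∧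
    -- local flux equation on E₂ (λ = lam12 on the left, 0 elsewhere)
    (∀ c1 a1 c2 a2 : ℝ,
      rInt 1 2 0 1 (fun z => (q2 z).1 * (c1 + a1 * z.1) + (q2 z).2 * (c2 + a2 * z.2)) -
        rInt 1 2 0 1 (fun _z => u2 * (a1 + a2)) =
      -((∫ t in (0:ℝ)..1, (0 : ℝ) * (-(c2 + a2 * (0:ℝ)))) +
        (∫ t in (0:ℝ)..1, (0 : ℝ) * (c2 + a2 * 1)) +
        (∫ t in (0:ℝ)..1, lam12 * (-(c1 + a1 * 1))) +
        (∫ t in (0:ℝ)..1, (0 : ℝ) * (c1 + a1 * 2)))) ∧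
    -- elementwise mass balance: ∫_E v div q_h = 0 for constant v (f = 0)
    (∀ v : ℝ, rInt 0 1 0 1 (fun z => v * div2 q1 z) = 0) ∧
    (∀ v : ℝ, rInt 1 2 0 1 (fun z => v * div2 q2 z) = 0) ∧
    -- flux conservation across the common edge N₁₂ = {1} × (0,1)
    (∫ t in (0:ℝ)..1, ((q1 (1, t)).1 * 1 + (q2 (1, t)).1 * (-1))) = 0 ∧
    -- λ_h and u_h attain negative values
    lam12 < 0 ∧ u2 < 0 := by
  obtain rfl : q1 = rt0 (49 / 2) (-27) (-(27 / 2)) 27 := by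
    ext z <;> simp only [hq1, rt0] <;> ring
  obtain rfl : q2 = rt0 (-(11 / 2)) 3 (3 / 2) (-3) := by
    ext z <;> simp only [hq2, rt0] <;> ring
  subst hu1 hu2 hlam
  refine ⟨fun c1 a1 c2 a2 => ?_, fun c1 a1 c2 a2 => ?_, fun v => ?_, fun v => ?_, ?_,
    by norm_num, by norm_num⟩
  · rw [rInt_rt0_pairing zero_le_one zero_le_one, rInt_const zero_le_one zero_le_one]
    simp only [intervalIntegral.integral_const, smul_eq_mul]
    ring
  · rw [rInt_rt0_pairing one_le_two zero_le_one, rInt_const one_le_two zero_le_one]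
    simp only [intervalIntegral.integral_const, smul_eq_mul]
    ring
  · simp [div2_rt0, rInt]
  · simp [div2_rt0, rInt]
  · norm_num [rt0]
end

section
/- (Counterexample coupling value, Q₁×Q₁²×P₀.) Let two unit squares share a vertical edge N₁₂, κ = 1, f = 0, Dirichlet data 1 on the left outer edge and 0 elsewhere, and stabilization τ > 0 on both squares. With α = 3τ/(4τ+6), the flux-conservation condition at N₁₂ leads to the equation −1/2 − τα/2 + τ/4 − λ(5 + 3τ/2 − τα) = 0, i.e., −(τ²+τ+6)/(8τ+12) = λ(3τ²+29τ+30)/(4τ+6); hence λ = −(τ²+τ+6)(4τ+6)/((8τ+12)(3τ²+29τ+30)) < 0 for every τ > 0. -/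
/- Abstracting `4 * τ + 6` keeps `field_simp` from renormalising the denominator into a form
in which it no longer recognises `h`. -/
lemma flux_constant_term_eq {τ : ℝ} (h : 4 * τ + 6 ≠ 0) :
    -(1 / 2) - τ * (3 * τ / (4 * τ + 6)) / 2 + τ / 4 = -(τ ^ 2 + τ + 6) / (8 * τ + 12) := by
  rw [show 8 * τ + 12 = 2 * (4 * τ + 6) by ring]
  generalize hd : 4 * τ + 6 = d at h ⊢
  field_simp
  subst hd
  ring

lemma flux_lambda_coeff_eq {τ : ℝ} (h : 4 * τ + 6 ≠ 0) :
    5 + 3 * τ / 2 - τ * (3 * τ / (4 * τ + 6)) = (3 * τ ^ 2 + 29 * τ + 30) / (4 * τ + 6) := by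
  generalize hd : 4 * τ + 6 = d at h ⊢
  field_simp
  subst hd
  ring

/-- the flux-conservation condition at the interior edge for the
Q₁ × Q₁² × P₀ counterexample forces a strictly negative skeleton value λ for every
τ > 0. -/
theorem stmt_15 (τ α lam : ℝ) (hτ : 0 < τ) (hα : α = 3 * τ / (4 * τ + 6))
    (hlam : lam =
      -((τ ^ 2 + τ + 6) * (4 * τ + 6)) / ((8 * τ + 12) * (3 * τ ^ 2 + 29 * τ + 30))) :
    (-(1 / 2) - τ * α / 2 + τ / 4 = -(τ ^ 2 + τ + 6) / (8 * τ + 12)) ∧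
    (5 + 3 * τ / 2 - τ * α = (3 * τ ^ 2 + 29 * τ + 30) / (4 * τ + 6)) ∧
    (∀ l : ℝ,
      -(1 / 2) - τ * α / 2 + τ / 4 - l * (5 + 3 * τ / 2 - τ * α) = 0 → l = lam) ∧
    lam < 0 := by
  subst hα hlam
  have h46 : 4 * τ + 6 ≠ 0 := by positivity
  refine ⟨flux_constant_term_eq h46, flux_lambda_coeff_eq h46, fun l hl => ?_, ?_⟩
  · rw [flux_constant_term_eq h46, flux_lambda_coeff_eq h46] at hl
    rw [eq_div_of_mul_eq (by positivity) (sub_eq_zero.mp hl).symm, div_div_div_eq, neg_mul]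
  · exact div_neg_of_neg_of_pos (neg_neg_of_pos (by positivity)) (by positivity)
end
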